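/- arXiv:1909.02245 — 2 statements merged into one kernel-verified Lean document; each statement's English description precedes it below -/
import Mathlib

section
/- Let a,b ∈ ℝ and let g : [0,1] → ℝ be bounded. Assume sol_a^b(E_g) ≠ ∅. Then for every Banach limit B and every φ ∈ sol_a^b(E_g) one has φ = B_φ + B_*; consequently sol_a^b(E_g) ⊆ {B_h + B_* : h ∈ 𝓑_a^b}. -/
open MeasureTheory unitInterval

noncomputable section

/-- A bounded real sequence. -/
def IsBddSeq (x : ℕ → ℝ) : Prop := ∃ C : ℝ, ∀ n, |x n| ≤ C

/-- A Banach limit: a linear (on bounded sequences), positive, shift-invariant and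
normalized functional on the space of bounded real sequences. -/
structure BanachLimit where
  toFun : (ℕ → ℝ) → ℝ
  map_add : ∀ x y : ℕ → ℝ, IsBddSeq x → IsBddSeq y →
    toFun (fun n => x n + y n) = toFun x + toFun y
  map_smul : ∀ (c : ℝ) (x : ℕ → ℝ), IsBddSeq x →
    toFun (fun n => c * x n) = c * toFun x
  nonneg : ∀ x : ℕ → ℝ, IsBddSeq x → (∀ n, 0 ≤ x n) → 0 ≤ toFun x
  shift : ∀ x : ℕ → ℝ, IsBddSeq x → toFun (fun n => x (n + 1)) = toFun x
  norm_one : toFun (fun _ => (1 : ℝ)) = 1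

/-- A medial limit with respect to a measure `P`: a Banach limit which commutes with
integration of uniformly bounded sequences of measurable functions. -/
def BanachLimit.IsMedial {Ω : Type*} [MeasurableSpace Ω] (B : BanachLimit)
    (P : Measure Ω) : Prop :=
  ∀ h : ℕ → Ω → ℝ, (∃ C : ℝ, ∀ m ω, |h m ω| ≤ C) → (∀ m, Measurable (h m)) →
    Measurable (fun ω => B.toFun (fun m => h m ω)) ∧
      ∫ ω, B.toFun (fun m => h m ω) ∂P = B.toFun (fun m => ∫ ω, h m ω ∂P)

/-- The operator `T`, `(Th)(x) = ∫_Ω h(f(x,ω)) dP(ω)`. -/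
def Tof {Ω : Type*} [MeasurableSpace Ω] (P : Measure Ω)
    (f : unitInterval → Ω → unitInterval) (h : unitInterval → ℝ) :
    unitInterval → ℝ :=
  fun x => ∫ ω, h (f x ω) ∂P

/-- The supremum norm of a function on `[0,1]`. -/
def supNorm (h : unitInterval → ℝ) : ℝ := ⨆ x, |h x|

/-- Membership in `𝓜([0,1],ℝ)`: `h` is bounded and `ω ↦ h (f x ω)` is measurable
for every `x`. -/
def MemM {Ω : Type*} [MeasurableSpace Ω]
    (f : unitInterval → Ω → unitInterval) (h : unitInterval → ℝ) : Prop :=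
  (∃ C : ℝ, ∀ x, |h x| ≤ C) ∧ ∀ x, Measurable fun ω => h (f x ω)

/-- The function `B_h(x) = B((T^m h(x))_{m ≥ 1})`. -/
def BLof {Ω : Type*} [MeasurableSpace Ω] (P : Measure Ω)
    (f : unitInterval → Ω → unitInterval) (B : BanachLimit)
    (h : unitInterval → ℝ) : unitInterval → ℝ :=
  fun x => B.toFun fun m => (Tof P f)^[m + 1] h x

/-- The function `g_k = Σ_{l=0}^{k-1} T^l g` (meaningful for `k ≥ 1`). -/
def gk {Ω : Type*} [MeasurableSpace Ω] (P : Measure Ω)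
    (f : unitInterval → Ω → unitInterval) (g : unitInterval → ℝ) (k : ℕ) :
    unitInterval → ℝ :=
  fun x => ∑ l ∈ Finset.range k, (Tof P f)^[l] g x

/-- The family `𝒢 = {g_k : k ≥ 1}` is bounded in the supremum norm. -/
def GBdd {Ω : Type*} [MeasurableSpace Ω] (P : Measure Ω)
    (f : unitInterval → Ω → unitInterval) (g : unitInterval → ℝ) : Prop :=
  ∃ C : ℝ, ∀ k : ℕ, 1 ≤ k → ∀ x, |gk P f g k x| ≤ C

/-- The function `B_*(x) = B((g_k(x))_{k ≥ 1})`. -/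
def BStar {Ω : Type*} [MeasurableSpace Ω] (P : Measure Ω)
    (f : unitInterval → Ω → unitInterval) (B : BanachLimit)
    (g : unitInterval → ℝ) : unitInterval → ℝ :=
  fun x => B.toFun fun k => gk P f g (k + 1) x

/-- `φ` satisfies equation (E_g): `ω ↦ φ(f(x,ω))` is measurable for every `x` and
`φ(x) = ∫_Ω φ(f(x,ω)) dP(ω) + g(x)` for every `x`. -/
def SatEq {Ω : Type*} [MeasurableSpace Ω] (P : Measure Ω)
    (f : unitInterval → Ω → unitInterval) (g φ : unitInterval → ℝ) : Prop :=
  (∀ x, Measurable fun ω => φ (f x ω)) ∧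
    ∀ x, φ x = (∫ ω, φ (f x ω) ∂P) + g x

/-- The class `𝓑_a^b` is closed under the Banach limit `B`. -/
def ClosedUnder {Ω : Type*} [MeasurableSpace Ω] (P : Measure Ω)
    (f : unitInterval → Ω → unitInterval) (𝓑 : Submodule ℝ (unitInterval → ℝ))
    (a b : ℝ) (B : BanachLimit) : Prop :=
  ∀ h : unitInterval → ℝ, h ∈ 𝓑 → h 0 = a → h 1 = b →
    BLof P f B h ∈ 𝓑 ∧ BLof P f B h 0 = a ∧ BLof P f B h 1 = b

section AuxStmt8

variable {Ω : Type*} [MeasurableSpace Ω] (P : Measure Ω) [IsProbabilityMeasure P]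
    (f : unitInterval → Ω → unitInterval)

lemma aux_Tof_bound {h : unitInterval → ℝ} {C : ℝ} (hb : ∀ x, |h x| ≤ C) :
    ∀ x, |Tof P f h x| ≤ C := by
  intro x
  have hnorm : ‖∫ ω, h (f x ω) ∂P‖ ≤ C * (P Set.univ).toReal :=
    norm_integral_le_of_norm_le_const (Filter.Eventually.of_forall fun ω => by
      simpa using hb (f x ω))
  simpa [Tof, measure_univ] using hnorm

lemma aux_iter_bound {h : unitInterval → ℝ} {C : ℝ} (hb : ∀ x, |h x| ≤ C) :
    ∀ m x, |(Tof P f)^[m] h x| ≤ C := by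
  intro m
  induction m with
  | zero => simpa using hb
  | succ n ih =>
      intro x
      rw [Function.iterate_succ_apply']
      exact aux_Tof_bound P f ih x

lemma aux_integrable_comp {h : unitInterval → ℝ} (hM : MemM f h) (x : unitInterval) :
    Integrable (fun ω => h (f x ω)) P := by
  obtain ⟨⟨C, hC⟩, hmeas⟩ := hM
  exact ⟨(hmeas x).aestronglyMeasurable,
    HasFiniteIntegral.of_bounded (C := C)
      (Filter.Eventually.of_forall fun ω => by simpa using hC (f x ω))⟩

lemma aux_Tof_sub {h₁ h₂ : unitInterval → ℝ} (h1 : MemM f h₁) (h2 : MemM f h₂) :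
    Tof P f (h₁ - h₂) = Tof P f h₁ - Tof P f h₂ := by
  funext x
  simp only [Tof, Pi.sub_apply]
  exact integral_sub (aux_integrable_comp P f h1 x) (aux_integrable_comp P f h2 x)

lemma aux_iter_mem (𝓑 : Submodule ℝ (unitInterval → ℝ))
    (h𝓑T : ∀ h ∈ 𝓑, Tof P f h ∈ 𝓑) {h : unitInterval → ℝ} (hh : h ∈ 𝓑) :
    ∀ m, (Tof P f)^[m] h ∈ 𝓑 := by
  intro m
  induction m with
  | zero => simpa using hh
  | succ n ih => rw [Function.iterate_succ_apply']; exact h𝓑T _ ih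

lemma aux_iter_sub (𝓑 : Submodule ℝ (unitInterval → ℝ))
    (h𝓑M : ∀ h ∈ 𝓑, MemM f h) (h𝓑T : ∀ h ∈ 𝓑, Tof P f h ∈ 𝓑)
    {h₁ h₂ : unitInterval → ℝ} (h1 : h₁ ∈ 𝓑) (h2 : h₂ ∈ 𝓑) :
    ∀ m, (Tof P f)^[m] (h₁ - h₂) = (Tof P f)^[m] h₁ - (Tof P f)^[m] h₂ := by
  intro m
  induction m with
  | zero => simp
  | succ n ih =>
      rw [Function.iterate_succ_apply', Function.iterate_succ_apply' (x := h₁),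
        Function.iterate_succ_apply' (x := h₂), ih,
        aux_Tof_sub P f (h𝓑M _ (aux_iter_mem P f 𝓑 h𝓑T h1 n))
          (h𝓑M _ (aux_iter_mem P f 𝓑 h𝓑T h2 n))]

lemma aux_Bconst (B : BanachLimit) (c : ℝ) : B.toFun (fun _ => c) = c := by
  have h1 : B.toFun (fun _ => c) = B.toFun (fun n => c * (fun _ => (1 : ℝ)) n) := by
    congr 1; funext n; ring
  rw [h1, B.map_smul c (fun _ => (1 : ℝ)) ⟨1, fun n => by simp⟩, B.norm_one, mul_one]

end AuxStmt8

/-- If `sol_a^b(E_g) ≠ ∅`, then for every Banach limit `B` and every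
`φ ∈ sol_a^b(E_g)` one has `φ = B_φ + B_*`; consequently
`sol_a^b(E_g) ⊆ {B_h + B_* : h ∈ 𝓑_a^b}`. -/
theorem stmt_8 {Ω : Type*} [MeasurableSpace Ω] (P : Measure Ω) [IsProbabilityMeasure P]
    (f : unitInterval → Ω → unitInterval)
    (hf0 : ∀ ω, f 0 ω = 0) (hf1 : ∀ ω, f 1 ω = 1)
    (𝓑 : Submodule ℝ (unitInterval → ℝ))
    (h𝓑M : ∀ h ∈ 𝓑, MemM f h)
    (h𝓑T : ∀ h ∈ 𝓑, Tof P f h ∈ 𝓑)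
    (a b : ℝ) (g : unitInterval → ℝ) (hg : ∃ C : ℝ, ∀ x, |g x| ≤ C)
    (hne : ∃ φ : unitInterval → ℝ, φ ∈ 𝓑 ∧ φ 0 = a ∧ φ 1 = b ∧ SatEq P f g φ) :
    ∀ B : BanachLimit,
      (∀ φ : unitInterval → ℝ, φ ∈ 𝓑 → φ 0 = a → φ 1 = b → SatEq P f g φ →
        ∀ x, φ x = BLof P f B φ x + BStar P f B g x) ∧
      {φ : unitInterval → ℝ | φ ∈ 𝓑 ∧ φ 0 = a ∧ φ 1 = b ∧ SatEq P f g φ} ⊆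
        {ψ : unitInterval → ℝ | ∃ h ∈ 𝓑, h 0 = a ∧ h 1 = b ∧
          ψ = fun x => BLof P f B h x + BStar P f B g x} := by
  intro B
  have main : ∀ φ : unitInterval → ℝ, φ ∈ 𝓑 → φ 0 = a → φ 1 = b → SatEq P f g φ →
      ∀ x, φ x = BLof P f B φ x + BStar P f B g x := by
    intro φ hφ _ _ hsat x
    have hTφ : Tof P f φ ∈ 𝓑 := h𝓑T φ hφ
    have hgeq : g = φ - Tof P f φ := by
      funext y
      have h := hsat.2 y
      simp only [Pi.sub_apply, Tof]
      linarith
    have hg𝓑 : g ∈ 𝓑 := hgeq ▸ Submodule.sub_mem 𝓑 hφ hTφ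
    have hTφeq : Tof P f φ = φ - g := by
      funext y
      have h := hsat.2 y
      simp only [Pi.sub_apply, Tof]
      linarith
    -- key identity: φ = T^[m] φ + g_m
    have key : ∀ m x, φ x = (Tof P f)^[m] φ x + gk P f g m x := by
      intro m
      induction m with
      | zero => intro x; simp [gk]
      | succ n ih =>
          intro x
          have h1 : (Tof P f)^[n + 1] φ x = (Tof P f)^[n] φ x - (Tof P f)^[n] g x := by
            rw [Function.iterate_succ_apply, hTφeq,
              aux_iter_sub P f 𝓑 h𝓑M h𝓑T hφ hg𝓑 n]
            simp
          have h2 : gk P f g (n + 1) x = gk P f g n x + (Tof P f)^[n] g x := by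
            simp [gk, Finset.sum_range_succ]
          rw [h1, h2]
          have := ih x
          linarith
    obtain ⟨⟨Cφ, hCφ⟩, _⟩ := h𝓑M φ hφ
    have bddφ : IsBddSeq (fun m => (Tof P f)^[m + 1] φ x) :=
      ⟨Cφ, fun m => aux_iter_bound P f hCφ (m + 1) x⟩
    have bddg : IsBddSeq (fun k => gk P f g (k + 1) x) := by
      refine ⟨|φ x| + Cφ, fun k => ?_⟩
      have hk := key (k + 1) x
      have hb := aux_iter_bound P f hCφ (k + 1) x
      have : gk P f g (k + 1) x = φ x - (Tof P f)^[k + 1] φ x := by linarith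
      show |gk P f g (k + 1) x| ≤ |φ x| + Cφ
      rw [this]
      calc |φ x - (Tof P f)^[k + 1] φ x| ≤ |φ x| + |(Tof P f)^[k + 1] φ x| :=
            abs_sub _ _
        _ ≤ |φ x| + Cφ := by linarith
    have heq : (fun _ : ℕ => φ x) =
        fun m => (Tof P f)^[m + 1] φ x + gk P f g (m + 1) x := by
      funext m
      exact key (m + 1) x
    calc φ x = B.toFun (fun _ => φ x) := (aux_Bconst B (φ x)).symm
      _ = B.toFun (fun m => (Tof P f)^[m + 1] φ x + gk P f g (m + 1) x) := by rw [heq]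
      _ = B.toFun (fun m => (Tof P f)^[m + 1] φ x) +
            B.toFun (fun k => gk P f g (k + 1) x) := B.map_add _ _ bddφ bddg
      _ = BLof P f B φ x + BStar P f B g x := rfl
  refine ⟨main, ?_⟩
  rintro φ ⟨hφ, hφ0, hφ1, hsat⟩
  exact ⟨φ, hφ, hφ0, hφ1, funext fun x => main φ hφ hφ0 hφ1 hsat x⟩
end
end

section
/- Let a,b ∈ ℝ, g ∈ 𝓑_0^0 and let B be a medial limit with respect to (Ω,𝒜,P) under which the class 𝓑_a^b is closed. Then equation (E_g) has a solution in 𝓑_a^b if and only if g is admissible for B and equation (E_0) has a solution in 𝓑_a^b. -/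
/-!
If `φ ∈ 𝓑_a^b` solves `φ = Tφ + g`, then `T^l g = T^l φ - T^(l+1) φ`, so the partial sums
telescope to `g_k = φ - T^k φ`: they are bounded, and applying `B` gives `B_* = φ - B_φ`.
Since `B` is medial it commutes with `T`, and shift invariance makes `B_φ` a fixed point of `T`,
i.e. a solution of `(E_0)`, lying in `𝓑_a^b` by closedness. Conversely, the same commutation
together with `T g_k = g_(k+1) - g` shows that `B_*` solves `(E_g)`, so for every solution `Φ`
of `(E_0)` in `𝓑_a^b` the sum `Φ + B_*` is a solution of `(E_g)` in `𝓑_a^b`.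
-/

open MeasureTheory unitInterval

noncomputable section

open Finset

namespace BanachLimit

theorem apply_const (B : BanachLimit) (c : ℝ) : B.toFun (fun _ => c) = c := by
  simpa [B.norm_one] using B.map_smul c (fun _ => 1) ⟨1, fun _ => by simp⟩

theorem map_sub (B : BanachLimit) {x y : ℕ → ℝ} (hx : IsBddSeq x) (hy : IsBddSeq y) :
    B.toFun (fun n => x n - y n) = B.toFun x - B.toFun y := by
  obtain ⟨C, hC⟩ := hy
  have hny : IsBddSeq (fun n => (-1 : ℝ) * y n) := ⟨C, fun n => by simpa using hC n⟩
  have e : (fun n => x n - y n) = fun n => x n + (-1 : ℝ) * y n := funext fun n => by ring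
  rw [e, B.map_add x _ hx hny, B.map_smul (-1) y ⟨C, hC⟩]
  ring

end BanachLimit

section Development

variable {Ω : Type*} [MeasurableSpace Ω] {P : Measure Ω} {f : unitInterval → Ω → unitInterval}

theorem MemM.integrable_comp [IsFiniteMeasure P] {h : unitInterval → ℝ} (hh : MemM f h)
    (x : unitInterval) : Integrable (fun ω => h (f x ω)) P := by
  obtain ⟨⟨C, hC⟩, hmeas⟩ := hh
  exact Integrable.of_bound (hmeas x).aestronglyMeasurable C
    (ae_of_all _ fun ω => by simpa [Real.norm_eq_abs] using hC (f x ω))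

theorem abs_iterate_Tof_le [IsProbabilityMeasure P] {h : unitInterval → ℝ} {C : ℝ}
    (hC : ∀ y, |h y| ≤ C) (k : ℕ) (x : unitInterval) : |(Tof P f)^[k] h x| ≤ C := by
  induction k generalizing x with
  | zero => exact hC x
  | succ k ih =>
    rw [Function.iterate_succ_apply']
    simpa [Tof, Real.norm_eq_abs] using norm_integral_le_of_norm_le_const (μ := P)
      (f := fun ω => (Tof P f)^[k] h (f x ω)) (ae_of_all _ fun ω => ih (f x ω))

theorem Tof_add [IsFiniteMeasure P] {h k : unitInterval → ℝ} (hh : MemM f h) (hk : MemM f k) :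
    Tof P f (h + k) = Tof P f h + Tof P f k :=
  funext fun x => integral_add (hh.integrable_comp x) (hk.integrable_comp x)

theorem Tof_sub [IsFiniteMeasure P] {h k : unitInterval → ℝ} (hh : MemM f h) (hk : MemM f k) :
    Tof P f (h - k) = Tof P f h - Tof P f k :=
  funext fun x => integral_sub (hh.integrable_comp x) (hk.integrable_comp x)

theorem SatEq.add [IsFiniteMeasure P] {g g' φ ψ : unitInterval → ℝ} (hφ : MemM f φ)
    (hψ : MemM f ψ) (hφg : SatEq P f g φ) (hψg' : SatEq P f g' ψ) :
    SatEq P f (g + g') (φ + ψ) := by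
  refine ⟨fun x => (hφg.1 x).add (hψg'.1 x), fun x => ?_⟩
  have hT := congrFun (Tof_add (P := P) hφ hψ) x
  simp only [Tof, Pi.add_apply] at hT ⊢
  rw [hT, hφg.2 x, hψg'.2 x]
  ring

section Invariant

variable {𝓑 : Submodule ℝ (unitInterval → ℝ)}

theorem iterate_Tof_mem (h𝓑T : ∀ h ∈ 𝓑, Tof P f h ∈ 𝓑) {h : unitInterval → ℝ} (hh : h ∈ 𝓑)
    (k : ℕ) : (Tof P f)^[k] h ∈ 𝓑 := by
  induction k with
  | zero => exact hh
  | succ k ih => rw [Function.iterate_succ_apply']; exact h𝓑T _ ih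

theorem gk_mem (h𝓑T : ∀ h ∈ 𝓑, Tof P f h ∈ 𝓑) {g : unitInterval → ℝ} (hg : g ∈ 𝓑) (k : ℕ) :
    gk P f g k ∈ 𝓑 := by
  have e : gk P f g k = ∑ l ∈ range k, (Tof P f)^[l] g := by
    funext x; simp [gk]
  rw [e]
  exact Submodule.sum_mem _ fun l _ => iterate_Tof_mem h𝓑T hg l

theorem iterate_Tof_sub [IsFiniteMeasure P] (h𝓑M : ∀ h ∈ 𝓑, MemM f h)
    (h𝓑T : ∀ h ∈ 𝓑, Tof P f h ∈ 𝓑) {h k : unitInterval → ℝ} (hh : h ∈ 𝓑) (hk : k ∈ 𝓑)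
    (l : ℕ) : (Tof P f)^[l] (h - k) = (Tof P f)^[l] h - (Tof P f)^[l] k := by
  induction l with
  | zero => rfl
  | succ l ih =>
    simp only [Function.iterate_succ_apply', ih]
    exact Tof_sub (h𝓑M _ (iterate_Tof_mem h𝓑T hh l)) (h𝓑M _ (iterate_Tof_mem h𝓑T hk l))

theorem Tof_gk [IsFiniteMeasure P] (h𝓑M : ∀ h ∈ 𝓑, MemM f h)
    (h𝓑T : ∀ h ∈ 𝓑, Tof P f h ∈ 𝓑) {g : unitInterval → ℝ} (hg : g ∈ 𝓑) (k : ℕ)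
    (x : unitInterval) : Tof P f (gk P f g k) x = gk P f g (k + 1) x - g x := by
  have hT : Tof P f (gk P f g k) x = ∑ l ∈ range k, (Tof P f)^[l + 1] g x := by
    simp only [Tof, gk]
    rw [integral_finsetSum _ fun l _ =>
      (h𝓑M _ (iterate_Tof_mem h𝓑T hg l)).integrable_comp x]
    refine sum_congr rfl fun l _ => ?_
    rw [Function.iterate_succ_apply']
    rfl
  rw [hT, gk, sum_range_succ']
  simp

theorem SatEq.eq_sub_Tof {g φ : unitInterval → ℝ} (hφ : SatEq P f g φ) :
    g = φ - Tof P f φ :=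
  funext fun x => by
    have := hφ.2 x
    simp only [Pi.sub_apply, Tof]
    linarith

theorem SatEq.gk_eq [IsFiniteMeasure P] (h𝓑M : ∀ h ∈ 𝓑, MemM f h)
    (h𝓑T : ∀ h ∈ 𝓑, Tof P f h ∈ 𝓑) {g φ : unitInterval → ℝ} (hφ𝓑 : φ ∈ 𝓑)
    (hφ : SatEq P f g φ) (k : ℕ) (x : unitInterval) :
    gk P f g k x = φ x - (Tof P f)^[k] φ x := by
  have hiter (l : ℕ) : (Tof P f)^[l] g x = (Tof P f)^[l] φ x - (Tof P f)^[l + 1] φ x := by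
    rw [hφ.eq_sub_Tof, iterate_Tof_sub h𝓑M h𝓑T hφ𝓑 (h𝓑T _ hφ𝓑), Pi.sub_apply,
      ← Function.iterate_succ_apply]
  rw [gk, sum_congr rfl fun l _ => hiter l, sum_range_sub']
  rfl

end Invariant

namespace BanachLimit.IsMedial

variable {B : BanachLimit}

theorem measurable_comp (hB : B.IsMedial P) {u : ℕ → unitInterval → ℝ} {C : ℝ}
    (hC : ∀ m y, |u m y| ≤ C) (hu : ∀ m x, Measurable fun ω => u m (f x ω))
    (x : unitInterval) : Measurable fun ω => B.toFun fun m => u m (f x ω) :=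
  (hB (fun m ω => u m (f x ω)) ⟨C, fun m ω => hC m (f x ω)⟩ fun m => hu m x).1

theorem Tof_apply (hB : B.IsMedial P) {u : ℕ → unitInterval → ℝ} {C : ℝ}
    (hC : ∀ m y, |u m y| ≤ C) (hu : ∀ m x, Measurable fun ω => u m (f x ω))
    (x : unitInterval) :
    Tof P f (fun y => B.toFun fun m => u m y) x = B.toFun fun m => Tof P f (u m) x :=
  (hB (fun m ω => u m (f x ω)) ⟨C, fun m ω => hC m (f x ω)⟩ fun m => hu m x).2

variable {𝓑 : Submodule ℝ (unitInterval → ℝ)}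

theorem satEq_BLof [IsProbabilityMeasure P] (hB : B.IsMedial P)
    (h𝓑M : ∀ h ∈ 𝓑, MemM f h) (h𝓑T : ∀ h ∈ 𝓑, Tof P f h ∈ 𝓑) {φ : unitInterval → ℝ}
    (hφ : φ ∈ 𝓑) : SatEq P f (fun _ => 0) (BLof P f B φ) := by
  obtain ⟨⟨C, hC⟩, -⟩ := h𝓑M φ hφ
  have hbdd (m : ℕ) (y : unitInterval) : |(Tof P f)^[m + 1] φ y| ≤ C :=
    abs_iterate_Tof_le hC _ y
  have hmeas (m : ℕ) (x : unitInterval) : Measurable fun ω => (Tof P f)^[m + 1] φ (f x ω) :=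
    (h𝓑M _ (iterate_Tof_mem h𝓑T hφ (m + 1))).2 x
  refine ⟨hB.measurable_comp hbdd hmeas, fun x => ?_⟩
  change BLof P f B φ x = Tof P f (fun y => B.toFun fun m => (Tof P f)^[m + 1] φ y) x + 0
  rw [add_zero, BLof, hB.Tof_apply hbdd hmeas]
  simp only [← Function.iterate_succ_apply' (Tof P f)]
  exact (B.shift (fun m => (Tof P f)^[m + 1] φ x) ⟨C, fun m => hbdd m x⟩).symm

theorem satEq_BStar [IsFiniteMeasure P] (hB : B.IsMedial P)
    (h𝓑M : ∀ h ∈ 𝓑, MemM f h) (h𝓑T : ∀ h ∈ 𝓑, Tof P f h ∈ 𝓑) {g : unitInterval → ℝ}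
    (hg : g ∈ 𝓑) (hG : GBdd P f g) : SatEq P f g (BStar P f B g) := by
  obtain ⟨C, hC⟩ := hG
  have hbdd (k : ℕ) (y : unitInterval) : |gk P f g (k + 1) y| ≤ C := hC _ (by omega) y
  have hmeas (k : ℕ) (x : unitInterval) : Measurable fun ω => gk P f g (k + 1) (f x ω) :=
    (h𝓑M _ (gk_mem h𝓑T hg (k + 1))).2 x
  refine ⟨hB.measurable_comp hbdd hmeas, fun x => ?_⟩
  change BStar P f B g x = Tof P f (fun y => B.toFun fun k => gk P f g (k + 1) y) x + g x
  rw [BStar, hB.Tof_apply hbdd hmeas]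
  simp only [Tof_gk h𝓑M h𝓑T hg]
  rw [B.map_sub ⟨C, fun k => hbdd (k + 1) x⟩ ⟨|g x|, fun _ => le_rfl⟩, B.apply_const,
    B.shift (fun k => gk P f g (k + 1) x) ⟨C, fun k => hbdd k x⟩]
  ring

end BanachLimit.IsMedial

def IsAdmissible (P : Measure Ω) (f : unitInterval → Ω → unitInterval)
    (𝓑 : Submodule ℝ (unitInterval → ℝ)) (B : BanachLimit) (g : unitInterval → ℝ) : Prop :=
  GBdd P f g ∧ BStar P f B g ∈ 𝓑 ∧ BStar P f B g 0 = 0 ∧ BStar P f B g 1 = 0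

namespace SatEq

variable {𝓑 : Submodule ℝ (unitInterval → ℝ)} {g φ : unitInterval → ℝ}

theorem gBdd [IsProbabilityMeasure P] (h𝓑M : ∀ h ∈ 𝓑, MemM f h)
    (h𝓑T : ∀ h ∈ 𝓑, Tof P f h ∈ 𝓑) (hφ𝓑 : φ ∈ 𝓑) (hφ : SatEq P f g φ) : GBdd P f g := by
  obtain ⟨⟨C, hC⟩, -⟩ := h𝓑M φ hφ𝓑
  refine ⟨2 * C, fun k _ x => ?_⟩
  rw [hφ.gk_eq h𝓑M h𝓑T hφ𝓑]
  calc |φ x - (Tof P f)^[k] φ x| ≤ |φ x| + |(Tof P f)^[k] φ x| := abs_sub _ _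
    _ ≤ 2 * C := by linarith [hC x, abs_iterate_Tof_le (P := P) (f := f) hC k x]

theorem BStar_eq [IsProbabilityMeasure P] (h𝓑M : ∀ h ∈ 𝓑, MemM f h)
    (h𝓑T : ∀ h ∈ 𝓑, Tof P f h ∈ 𝓑) (B : BanachLimit) (hφ𝓑 : φ ∈ 𝓑)
    (hφ : SatEq P f g φ) : BStar P f B g = φ - BLof P f B φ := by
  obtain ⟨⟨C, hC⟩, -⟩ := h𝓑M φ hφ𝓑
  funext x
  simp only [BStar, hφ.gk_eq h𝓑M h𝓑T hφ𝓑]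
  rw [B.map_sub ⟨|φ x|, fun _ => le_rfl⟩ ⟨C, fun k => abs_iterate_Tof_le hC (k + 1) x⟩,
    B.apply_const]
  rfl

theorem isAdmissible [IsProbabilityMeasure P] (h𝓑M : ∀ h ∈ 𝓑, MemM f h)
    (h𝓑T : ∀ h ∈ 𝓑, Tof P f h ∈ 𝓑) {a b : ℝ} {B : BanachLimit}
    (hclosed : ClosedUnder P f 𝓑 a b B) (hφ𝓑 : φ ∈ 𝓑) (hφ0 : φ 0 = a) (hφ1 : φ 1 = b)
    (hφ : SatEq P f g φ) : IsAdmissible P f 𝓑 B g := by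
  obtain ⟨hB𝓑, hB0, hB1⟩ := hclosed φ hφ𝓑 hφ0 hφ1
  rw [IsAdmissible, hφ.BStar_eq h𝓑M h𝓑T B hφ𝓑]
  exact ⟨hφ.gBdd h𝓑M h𝓑T hφ𝓑, sub_mem hφ𝓑 hB𝓑, by simp [hφ0, hB0], by simp [hφ1, hB1]⟩

end SatEq

end Development

theorem stmt_12_general {Ω : Type*} [MeasurableSpace Ω] (P : Measure Ω) [IsProbabilityMeasure P]
    (f : unitInterval → Ω → unitInterval)
    (𝓑 : Submodule ℝ (unitInterval → ℝ))
    (h𝓑M : ∀ h ∈ 𝓑, MemM f h)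
    (h𝓑T : ∀ h ∈ 𝓑, Tof P f h ∈ 𝓑)
    (a b : ℝ) (B : BanachLimit) (hB : B.IsMedial P)
    (hclosed : ClosedUnder P f 𝓑 a b B)
    (g : unitInterval → ℝ) (hg : g ∈ 𝓑) :
    (∃ φ : unitInterval → ℝ, φ ∈ 𝓑 ∧ φ 0 = a ∧ φ 1 = b ∧ SatEq P f g φ) ↔
      ((GBdd P f g ∧ BStar P f B g ∈ 𝓑 ∧
          BStar P f B g 0 = 0 ∧ BStar P f B g 1 = 0) ∧
        ∃ Φ : unitInterval → ℝ, Φ ∈ 𝓑 ∧ Φ 0 = a ∧ Φ 1 = b ∧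
          SatEq P f (fun _ => 0) Φ) := by
  constructor
  · rintro ⟨φ, hφ𝓑, hφ0, hφ1, hφ⟩
    obtain ⟨hB𝓑, hB0, hB1⟩ := hclosed φ hφ𝓑 hφ0 hφ1
    exact ⟨hφ.isAdmissible h𝓑M h𝓑T hclosed hφ𝓑 hφ0 hφ1,
      BLof P f B φ, hB𝓑, hB0, hB1, hB.satEq_BLof h𝓑M h𝓑T hφ𝓑⟩
  · rintro ⟨⟨hG, hS𝓑, hS0, hS1⟩, Φ, hΦ𝓑, hΦ0, hΦ1, hΦ⟩
    refine ⟨Φ + BStar P f B g, add_mem hΦ𝓑 hS𝓑, by simp [hΦ0, hS0], by simp [hΦ1, hS1], ?_⟩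
    have hsum := hΦ.add (h𝓑M _ hΦ𝓑) (h𝓑M _ hS𝓑) (hB.satEq_BStar h𝓑M h𝓑T hg hG)
    rwa [show (fun _ => (0 : ℝ)) + g = g from zero_add g] at hsum

/-- If `g ∈ 𝓑_0^0` and `𝓑_a^b` is closed under a medial limit `B`,
then (E_g) has a solution in `𝓑_a^b` if and only if `g` is admissible for `B`
and (E_0) has a solution in `𝓑_a^b`. -/
theorem stmt_12 {Ω : Type*} [MeasurableSpace Ω] (P : Measure Ω) [IsProbabilityMeasure P]
    (f : unitInterval → Ω → unitInterval)
    (hf0 : ∀ ω, f 0 ω = 0) (hf1 : ∀ ω, f 1 ω = 1)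
    (𝓑 : Submodule ℝ (unitInterval → ℝ))
    (h𝓑M : ∀ h ∈ 𝓑, MemM f h)
    (h𝓑T : ∀ h ∈ 𝓑, Tof P f h ∈ 𝓑)
    (a b : ℝ) (B : BanachLimit) (hB : B.IsMedial P)
    (hclosed : ClosedUnder P f 𝓑 a b B)
    (g : unitInterval → ℝ) (hg : g ∈ 𝓑) (hg0 : g 0 = 0) (hg1 : g 1 = 0) :
    (∃ φ : unitInterval → ℝ, φ ∈ 𝓑 ∧ φ 0 = a ∧ φ 1 = b ∧ SatEq P f g φ) ↔
      ((GBdd P f g ∧ BStar P f B g ∈ 𝓑 ∧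
          BStar P f B g 0 = 0 ∧ BStar P f B g 1 = 0) ∧
        ∃ Φ : unitInterval → ℝ, Φ ∈ 𝓑 ∧ Φ 0 = a ∧ Φ 1 = b ∧
          SatEq P f (fun _ => 0) Φ) :=
  stmt_12_general P f 𝓑 h𝓑M h𝓑T a b B hB hclosed g hg
end
end
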